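/- Let p, q, λ₀ ∈ ℝ with p² + q² + λ₀² = 1, and define ε(x,y) = p x + i q y and λ(x,y) = λ₀ on the open set { (x,y) : x > 1, |y| < 1 }. Then ε and λ solve the Ernst equations in prolate spheroidal coordinates: for ζ ∈ {ε, λ}, (1 − |ε|² − |λ|²) [ ∂_x((x²−1)∂_x ζ) + ∂_y((1−y²)∂_y ζ) ] = −2 [ (x²−1)(ε̄ ∂_x ε + λ̄ ∂_x λ) ∂_x ζ + (1−y²)(ε̄ ∂_y ε + λ̄ ∂_y λ) ∂_y ζ ]. -/

import Mathlib

/-!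
The potential `ε = p x + i q y` is affine, with `∂ₓε = p` and `∂_y ε = i q`, and `λ = λ₀` is
constant, so the `λ`-equation reads `0 = 0` and the Laplacian-type side of the `ε`-equation is
`2 (p x - i q y) = 2 ε̄`. Both sides of the `ε`-equation are then `2 ε̄` times
`p² (1 - x²) + q² (1 - y²)`, which equals `1 - |ε|² - λ₀²` because `p² + q² + λ₀² = 1`.
-/

open Complex

/-- `i`-th partial derivative of a map on `ℝⁿ`. -/
noncomputable def pd {n : ℕ} {E : Type*} [NormedAddCommGroup E] [NormedSpace ℝ E]
    (f : (Fin n → ℝ) → E) (i : Fin n) (x : Fin n → ℝ) : E :=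
  fderiv ℝ f x (Pi.single i 1)

section PartialDerivative

variable {n : ℕ} {E : Type*} [NormedAddCommGroup E] [NormedSpace ℝ E]

theorem HasFDerivAt.pd_eq {f : (Fin n → ℝ) → E} {f' : (Fin n → ℝ) →L[ℝ] E} {x : Fin n → ℝ}
    (hf : HasFDerivAt f f' x) (i : Fin n) : pd f i x = f' (Pi.single i 1) := by
  rw [pd, hf.fderiv]

theorem pd_const (c : E) (i : Fin n) (x : Fin n → ℝ) : pd (fun _ => c) i x = 0 := by
  simp [pd]

theorem HasDerivAt.hasFDerivAt_comp_apply {f : ℝ → E} {f' : E} {x : Fin n → ℝ} {j : Fin n}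
    (hf : HasDerivAt f f' (x j)) :
    HasFDerivAt (fun w : Fin n → ℝ => f (w j))
      ((ContinuousLinearMap.toSpanSingleton ℝ f').comp (ContinuousLinearMap.proj j)) x :=
  hf.hasFDerivAt.comp x (hasFDerivAt_apply j x)

theorem HasDerivAt.pd_comp_apply {f : ℝ → E} {f' : E} {x : Fin n → ℝ} {i : Fin n}
    (hf : HasDerivAt f f' (x i)) : pd (fun w => f (w i)) i x = f' := by
  simp [hf.hasFDerivAt_comp_apply.pd_eq]

theorem pd_ofReal_sq_sub_one_mul (c : ℂ) (i : Fin n) (x : Fin n → ℝ) :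
    pd (fun w => (((w i) ^ 2 - 1 : ℝ) : ℂ) * c) i x = 2 * x i * c :=
  HasDerivAt.pd_comp_apply (f := fun t => ((t ^ 2 - 1 : ℝ) : ℂ) * c) <| by
    simpa using ((hasDerivAt_pow 2 (x i)).sub_const 1).ofReal_comp.mul_const c

theorem pd_ofReal_one_sub_sq_mul (c : ℂ) (i : Fin n) (x : Fin n → ℝ) :
    pd (fun w => ((1 - (w i) ^ 2 : ℝ) : ℂ) * c) i x = -2 * x i * c :=
  HasDerivAt.pd_comp_apply (f := fun t => ((1 - t ^ 2 : ℝ) : ℂ) * c) <| by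
    simpa using ((hasDerivAt_pow 2 (x i)).const_sub 1).ofReal_comp.mul_const c

end PartialDerivative

section KerrNewman

noncomputable def kerrNewmanPotential (p q : ℝ) : (Fin 2 → ℝ) → ℂ :=
  fun pt => (p * pt 0 : ℝ) + I * (q * pt 1 : ℝ)

variable (p q : ℝ) (x : Fin 2 → ℝ)

theorem hasFDerivAt_kerrNewmanPotential :
    HasFDerivAt (kerrNewmanPotential p q)
      ((ContinuousLinearMap.toSpanSingleton ℝ (p : ℂ)).comp (ContinuousLinearMap.proj 0) +
        (ContinuousLinearMap.toSpanSingleton ℝ (I * q)).comp (ContinuousLinearMap.proj 1)) x := by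
  have h₀ : HasDerivAt (fun s : ℝ => ((p * s : ℝ) : ℂ)) p (x 0) := by
    simpa using ((hasDerivAt_id _).const_mul p).ofReal_comp
  have h₁ : HasDerivAt (fun s : ℝ => I * ((q * s : ℝ) : ℂ)) (I * q) (x 1) := by
    simpa using ((hasDerivAt_id _).const_mul q).ofReal_comp.const_mul I
  exact h₀.hasFDerivAt_comp_apply.fun_add h₁.hasFDerivAt_comp_apply

theorem pd_kerrNewmanPotential_zero : pd (kerrNewmanPotential p q) 0 x = p := by
  simp [(hasFDerivAt_kerrNewmanPotential p q x).pd_eq]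

theorem pd_kerrNewmanPotential_one : pd (kerrNewmanPotential p q) 1 x = I * q := by
  simp [(hasFDerivAt_kerrNewmanPotential p q x).pd_eq]

theorem conj_kerrNewmanPotential :
    starRingEnd ℂ (kerrNewmanPotential p q x) = p * x 0 - I * (q * x 1) := by
  simp [kerrNewmanPotential, sub_eq_add_neg]

theorem one_sub_normSq_kerrNewmanPotential {l₀ : ℝ} (hpq : p ^ 2 + q ^ 2 + l₀ ^ 2 = 1) :
    1 - normSq (kerrNewmanPotential p q x) - normSq (l₀ : ℂ) =
      p ^ 2 * (1 - x 0 ^ 2) + q ^ 2 * (1 - x 1 ^ 2) := by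
  simp only [kerrNewmanPotential, normSq_apply, add_re, add_im, ofReal_re, ofReal_im,
    mul_re, mul_im, I_re, I_im]
  linear_combination -hpq

end KerrNewman

/-- The potentials `ε = px + iqy`, `λ = l₀` with `p² + q² + l₀² = 1` solve the Ernst
equations in prolate spheroidal coordinates on `{x > 1, |y| < 1}`. -/
theorem kerr_newman_ernst_solution (p q l₀ : ℝ) (hpq : p ^ 2 + q ^ 2 + l₀ ^ 2 = 1)
    (ε lam : (Fin 2 → ℝ) → ℂ)
    (hε : ε = fun pt => (p * pt 0 : ℝ) + Complex.I * (q * pt 1 : ℝ))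
    (hlam : lam = fun _ => (l₀ : ℂ)) :
    ∀ ζ ∈ ({ε, lam} : Set ((Fin 2 → ℝ) → ℂ)),
      ∀ pt : Fin 2 → ℝ, pt 0 > 1 → |pt 1| < 1 →
        ((1 - Complex.normSq (ε pt) - Complex.normSq (lam pt) : ℝ) : ℂ) *
            (pd (fun w => (((w 0) ^ 2 - 1 : ℝ) : ℂ) * pd ζ 0 w) 0 pt +
              pd (fun w => ((1 - (w 1) ^ 2 : ℝ) : ℂ) * pd ζ 1 w) 1 pt) =
          -2 * ((((pt 0) ^ 2 - 1 : ℝ) : ℂ) *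
                ((starRingEnd ℂ) (ε pt) * pd ε 0 pt +
                  (starRingEnd ℂ) (lam pt) * pd lam 0 pt) * pd ζ 0 pt +
              ((1 - (pt 1) ^ 2 : ℝ) : ℂ) *
                ((starRingEnd ℂ) (ε pt) * pd ε 1 pt +
                  (starRingEnd ℂ) (lam pt) * pd lam 1 pt) * pd ζ 1 pt) := by
  obtain rfl : ε = kerrNewmanPotential p q := hε
  subst hlam
  rintro ζ (rfl | rfl) x - -
  · simp only [pd_kerrNewmanPotential_zero, pd_kerrNewmanPotential_one, pd_const,
      pd_ofReal_sq_sub_one_mul, pd_ofReal_one_sub_sq_mul, conj_kerrNewmanPotential,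
      one_sub_normSq_kerrNewmanPotential p q x hpq]
    push_cast
    linear_combination (2 * (p * x 0 - I * (q * x 1)) * q ^ 2 * (1 - x 1 ^ 2)) * I_sq
  · simp [pd_const]
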